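/- Let B be a real m × n matrix, r a positive integer, and α > 0 a real number. Let ω⁽¹⁾, …, ω⁽ʳ⁾ be independent standard Gaussian random vectors in ℝⁿ (each with law the product of n copies of the standard normal distribution N(0,1)). Then the probability that ‖B‖ > α·√(2/π)·max_{i=1,…,r} ‖B ω⁽ⁱ⁾‖ is at most α^{−r}, where ‖B‖ denotes the ℓ²→ℓ² operator norm of B and ‖·‖ the Euclidean norm on ℝᵐ. -/

import Mathlib

/-!
If the adjoint `Tᴴ` attains its norm at `u` with `‖u‖ ≤ 1`, then `w = Tᴴ u` has `‖w‖ = ‖T‖` and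
`|⟪w, x⟫| ≤ ‖T x‖` for all `x`. For a standard Gaussian vector `ω`, the variable `⟪w, ω⟫` is
`N(0, ‖w‖²)`, whose density is bounded by `1 / (√(2π) ‖w‖)`; hence
`P(‖T ω‖ < t) ≤ P(|⟪w, ω⟫| < t) ≤ 2t / (√(2π) ‖T‖)`, which is `1/α` for `t = ‖T‖ / (α √(2/π))`.
The `r` test vectors are independent, so the bound is raised to the power `r`.
-/

open MeasureTheory ProbabilityTheory
open Real RealInnerProductSpace
open scoped NNReal ENNReal

namespace ContinuousLinearMap

lemma exists_norm_le_one_norm_apply_eq {𝕜 E F : Type*} [DenselyNormedField 𝕜]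
    [NormedAddCommGroup E] [NormedSpace 𝕜 E] [ProperSpace E] [SeminormedAddCommGroup F]
    [NormedSpace 𝕜 F] (f : E →L[𝕜] F) : ∃ x, ‖x‖ ≤ 1 ∧ ‖f x‖ = ‖f‖ := by
  have hK : IsCompact ((fun x ↦ ‖f x‖) '' Metric.closedBall 0 1) :=
    (isCompact_closedBall 0 1).image (by fun_prop)
  obtain ⟨x, hx, hfx⟩ := hK.sSup_mem ((Metric.nonempty_closedBall.mpr zero_le_one).image _)
  exact ⟨x, mem_closedBall_zero_iff.mp hx, hfx.trans f.sSup_unitClosedBall_eq_norm⟩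

lemma exists_norm_eq_abs_inner_le_norm_apply {E F : Type*} [NormedAddCommGroup E]
    [InnerProductSpace ℝ E] [CompleteSpace E] [NormedAddCommGroup F] [InnerProductSpace ℝ F]
    [FiniteDimensional ℝ F] (T : E →L[ℝ] F) :
    ∃ w : E, ‖w‖ = ‖T‖ ∧ ∀ x, |⟪w, x⟫| ≤ ‖T x‖ := by
  obtain ⟨u, hu, hTu⟩ := (adjoint T).exists_norm_le_one_norm_apply_eq
  refine ⟨adjoint T u, by rw [hTu, LinearIsometryEquiv.norm_map], fun x ↦ ?_⟩
  rw [adjoint_inner_left]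
  exact (abs_real_inner_le_norm u (T x)).trans (mul_le_of_le_one_left (norm_nonneg _) hu)

end ContinuousLinearMap

namespace ProbabilityTheory

lemma gaussianPDFReal_le (μ : ℝ) (v : ℝ≥0) (x : ℝ) :
    gaussianPDFReal μ v x ≤ (√(2 * π * v))⁻¹ := by
  rw [gaussianPDFReal_def]
  refine mul_le_of_le_one_right (by positivity) (exp_le_one_iff.mpr ?_)
  rw [neg_div]
  exact neg_nonpos.mpr (by positivity)

lemma gaussianReal_le_mul_volume (μ : ℝ) {v : ℝ≥0} (hv : v ≠ 0) (s : Set ℝ) :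
    gaussianReal μ v s ≤ ENNReal.ofReal (√(2 * π * v))⁻¹ * volume s := by
  rw [gaussianReal_apply μ hv, ← setLIntegral_const]
  exact lintegral_mono fun x ↦ ENNReal.ofReal_le_ofReal (gaussianPDFReal_le μ v x)

lemma gaussianReal_ball_le (μ : ℝ) {v : ℝ≥0} (hv : v ≠ 0) (a t : ℝ) :
    gaussianReal μ v (Metric.ball a t) ≤ ENNReal.ofReal (2 * t / √(2 * π * v)) := by
  grw [gaussianReal_le_mul_volume μ hv, Real.volume_ball, ← ENNReal.ofReal_mul (by positivity)]
  rw [inv_mul_eq_div]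

variable {E : Type*} [NormedAddCommGroup E] [InnerProductSpace ℝ E] [FiniteDimensional ℝ E]
  [MeasurableSpace E] [BorelSpace E]

lemma stdGaussian_map_inner (w : E) :
    (stdGaussian E).map (fun x ↦ ⟪w, x⟫) = gaussianReal 0 (‖w‖₊ ^ 2) := by
  have h := IsGaussian.map_eq_gaussianReal (μ := stdGaussian E) (innerSL ℝ w)
  rw [integral_strongDual_stdGaussian, variance_dual_stdGaussian, innerSL_apply_norm] at h
  convert h using 2
  · ext; simp
  · rw [← coe_nnnorm, ← NNReal.coe_pow, Real.toNNReal_coe]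

lemma stdGaussian_abs_inner_lt_le {w : E} (hw : w ≠ 0) (t : ℝ) :
    stdGaussian E {x | |⟪w, x⟫| < t} ≤ ENNReal.ofReal (2 * t / (√(2 * π) * ‖w‖)) := by
  have hball : {x | |⟪w, x⟫| < t} = (fun x ↦ ⟪w, x⟫) ⁻¹' Metric.ball 0 t := by
    ext; simp
  rw [hball, ← Measure.map_apply (by fun_prop) Metric.isOpen_ball.measurableSet,
    stdGaussian_map_inner]
  convert gaussianReal_ball_le 0 (pow_ne_zero 2 (nnnorm_ne_zero_iff.mpr hw)) 0 t using 4
  rw [NNReal.coe_pow, coe_nnnorm, sqrt_mul' _ (sq_nonneg _), sqrt_sq (norm_nonneg w)]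

variable {F : Type*} [NormedAddCommGroup F] [InnerProductSpace ℝ F] [FiniteDimensional ℝ F]

lemma stdGaussian_mul_norm_apply_lt_opNorm_le (T : E →L[ℝ] F) {α : ℝ} (hα : 0 < α) :
    stdGaussian E {x | α * √(2 / π) * ‖T x‖ < ‖T‖} ≤ ENNReal.ofReal α⁻¹ := by
  rcases eq_or_ne T 0 with rfl | hT
  · simp
  obtain ⟨w, hw, hwT⟩ := T.exists_norm_eq_abs_inner_le_norm_apply
  have hαc : 0 < α * √(2 / π) := by positivity
  have hc : √(2 / π) * √(2 * π) = 2 := by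
    rw [← sqrt_mul (by positivity), show 2 / π * (2 * π) = 2 ^ 2 by field_simp,
      sqrt_sq zero_le_two]
  calc stdGaussian E {x | α * √(2 / π) * ‖T x‖ < ‖T‖}
      ≤ stdGaussian E {x | |⟪w, x⟫| < ‖T‖ / (α * √(2 / π))} := by
        refine measure_mono fun x hx ↦ (hwT x).trans_lt ?_
        rwa [lt_div_iff₀' hαc]
    _ ≤ ENNReal.ofReal (2 * (‖T‖ / (α * √(2 / π))) / (√(2 * π) * ‖w‖)) :=
        stdGaussian_abs_inner_lt_le (norm_pos_iff.mp (hw ▸ norm_pos_iff.mpr hT)) _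
    _ = ENNReal.ofReal α⁻¹ := by
        rw [hw]
        congr 1
        field_simp [norm_ne_zero_iff.mpr hT]
        exact hc.symm

end ProbabilityTheory

theorem randomized_norm_estimate_general
    {m n : ℕ} (B : Matrix (Fin m) (Fin n) ℝ) (r : ℕ)
    (α : ℝ) (hα : 0 < α) :
    (Measure.pi fun _ : Fin r => Measure.pi fun _ : Fin n => gaussianReal 0 1)
      {ω : Fin r → Fin n → ℝ |
        α * Real.sqrt (2 / Real.pi) *
            (⨆ i : Fin r, ‖(EuclideanSpace.equiv (Fin m) ℝ).symm (B.mulVec (ω i))‖)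
          < ‖LinearMap.toContinuousLinearMap (Matrix.toEuclideanLin B)‖} ≤
      ENNReal.ofReal ((α ^ r)⁻¹) := by
  set μ := Measure.pi fun _ : Fin n => gaussianReal 0 1
  set T := LinearMap.toContinuousLinearMap (Matrix.toEuclideanLin B)
  set S := {v : Fin n → ℝ | α * √(2 / π) * ‖T (WithLp.toLp 2 v)‖ < ‖T‖}
  have hS : μ S ≤ ENNReal.ofReal α⁻¹ := by
    have hmeas : MeasurableSet {x | α * √(2 / π) * ‖T x‖ < ‖T‖} :=
      measurableSet_lt (by fun_prop) measurable_const
    calc μ S = stdGaussian _ {x | α * √(2 / π) * ‖T x‖ < ‖T‖} := by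
          rw [← map_pi_eq_stdGaussian, Measure.map_apply (by fun_prop) hmeas]
          rfl
      _ ≤ ENNReal.ofReal α⁻¹ := stdGaussian_mul_norm_apply_lt_opNorm_le T hα
  calc _ ≤ Measure.pi (fun _ : Fin r ↦ μ) (Set.univ.pi fun _ ↦ S) := by
        refine measure_mono fun ω hω i _ ↦ ?_
        have hle : ‖T (WithLp.toLp 2 (ω i))‖ ≤ ⨆ j, ‖T (WithLp.toLp 2 (ω j))‖ :=
          le_ciSup (f := fun j ↦ ‖T (WithLp.toLp 2 (ω j))‖) (Set.finite_range _).bddAbove i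
        exact (mul_le_mul_of_nonneg_left hle (by positivity)).trans_lt hω
    _ = μ S ^ r := by rw [Measure.pi_pi, Finset.prod_const, Finset.card_univ, Fintype.card_fin]
    _ ≤ ENNReal.ofReal α⁻¹ ^ r := by gcongr
    _ = ENNReal.ofReal ((α ^ r)⁻¹) := by rw [← ENNReal.ofReal_pow (by positivity), inv_pow]

/-- Randomized a posteriori norm estimate (Halko–Martinsson–Tropp): for a real `m × n`
matrix `B`, `r` independent standard Gaussian test vectors `ω⁽¹⁾,…,ω⁽ʳ⁾` in `ℝⁿ`, and
`α > 0`, the probability that `‖B‖ > α·√(2/π)·max_i ‖B ω⁽ⁱ⁾‖` is at most `α⁻ʳ`.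
Here `‖B‖` is the `ℓ² → ℓ²` operator norm and the `r` independent standard Gaussian
vectors are modelled by the product measure of `r · n` copies of `N(0,1)`. -/
theorem randomized_norm_estimate
    {m n : ℕ} (B : Matrix (Fin m) (Fin n) ℝ) (r : ℕ) (hr : 0 < r)
    (α : ℝ) (hα : 0 < α) :
    (Measure.pi fun _ : Fin r => Measure.pi fun _ : Fin n => gaussianReal 0 1)
      {ω : Fin r → Fin n → ℝ |
        α * Real.sqrt (2 / Real.pi) *
            (⨆ i : Fin r, ‖(EuclideanSpace.equiv (Fin m) ℝ).symm (B.mulVec (ω i))‖)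
          < ‖LinearMap.toContinuousLinearMap (Matrix.toEuclideanLin B)‖} ≤
      ENNReal.ofReal ((α ^ r)⁻¹) :=
  randomized_norm_estimate_general B r α hα
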